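/- Fix integers n ≥ k ≥ 2 and reals 0 < p ≤ q ≤ 1 with p q·C(n,k) > 4·n·log n. Let G ~ H^{(k)}(n,p) and H ~ H^{(k)}(n,q) be independent. Then for all sufficiently large n, with probability at least 1 − e^{−n/2}, one has discP(G,H) ≤ 2·√(p q·C(n,k)·n·log n). -/

import Mathlib

open MeasureTheory Finset Filter

/-- Bernoulli measure on `Bool` with success probability `p`. -/
noncomputable def bern (p : ℝ) : Measure Bool :=
  ENNReal.ofReal p • Measure.dirac true + ENNReal.ofReal (1 - p) • Measure.dirac false

/-- Product Bernoulli measure on subsets of `Finset (Fin n)` (indicator functions),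
modelling the random hypergraph `H^{(k)}(n, p)`. -/
noncomputable def hypMeasure (n : ℕ) (p : ℝ) : Measure (Finset (Fin n) → Bool) :=
  Measure.pi fun _ => bern p

/-- The edge set of the `k`-uniform hypergraph determined by the outcome `ω`. -/
def edgesOf (n k : ℕ) (ω : Finset (Fin n) → Bool) : Finset (Finset (Fin n)) :=
  Finset.univ.filter fun s => s.card = k ∧ ω s = true

/-- `e(G_π ∩ H)`, the number of common edges of `G` permuted by `π` and `H`. -/
def overlap (n : ℕ) (G H : Finset (Finset (Fin n))) (π : Equiv.Perm (Fin n)) : ℕ :=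
  ((G.image fun e => e.image π) ∩ H).card

/-- The relative discrepancy `disc(G, H)`. -/
noncomputable def disc (n k : ℕ) (G H : Finset (Finset (Fin n))) : ℝ :=
  Finset.univ.sup' Finset.univ_nonempty fun π : Equiv.Perm (Fin n) =>
    |(overlap n G H π : ℝ) -
      ((G.card : ℝ) / (n.choose k)) * ((H.card : ℝ) / (n.choose k)) * (n.choose k)|

/-- The probabilistic discrepancy `discP(G, H)`. -/
noncomputable def discP (n k : ℕ) (p q : ℝ) (G H : Finset (Finset (Fin n))) : ℝ :=
  Finset.univ.sup' Finset.univ_nonempty fun π : Equiv.Perm (Fin n) =>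
    |(overlap n G H π : ℝ) - p * q * (n.choose k)|

/-- `N = C(n - ⌊n/k⌋, k - 1)`. -/
def Nk (k n : ℕ) : ℕ := (n - n / k).choose (k - 1)

/-!
For a fixed permutation `σ`, the overlap `e(G_σ ∩ H)` counts the `k`-sets `e` with `e ∈ G` and
`σ e ∈ H`; these are `C(n,k)` independent events of probability `pq`, so its moment generating
function is `(1 + pq (eˡ - 1))^C(n,k) ≤ exp (m (eˡ - 1))` with `m = pq C(n,k)`. Chernoff's bound
at `l = ±5t/(7m)`, together with `eˣ ≤ 1 + x + 7x²/10` for `|x| ≤ 5/7`, gives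
`P(|e(G_σ ∩ H) - m| > t) ≤ 2 exp(-5t²/(14m))`, which is `2 exp(-(10/7) n log n)` at
`t = 2 √(m n log n)`; here `t ≤ m` because `m > 4 n log n`. A union bound over the
`n! ≤ exp(n log n)` permutations leaves `2 exp(-(3/7) n log n) ≤ exp(-n/2)`.
-/

open ProbabilityTheory Real

lemma isProbabilityMeasure_bern {p : ℝ} (h0 : 0 ≤ p) (h1 : p ≤ 1) :
    IsProbabilityMeasure (bern p) := by
  constructor
  simp [bern, ← ENNReal.ofReal_add h0 (sub_nonneg.2 h1)]

lemma integral_bern {p : ℝ} (h0 : 0 ≤ p) (h1 : p ≤ 1) (g : Bool → ℝ) :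
    ∫ b, g b ∂bern p = p * g true + (1 - p) * g false := by
  have := isProbabilityMeasure_bern h0 h1
  rw [integral_fintype .of_finite]
  simp [bern, measureReal_def, h0, h1, add_comm]

lemma isProbabilityMeasure_hypMeasure (n : ℕ) {p : ℝ} (h0 : 0 ≤ p) (h1 : p ≤ 1) :
    IsProbabilityMeasure (hypMeasure n p) :=
  have := isProbabilityMeasure_bern h0 h1
  inferInstanceAs (IsProbabilityMeasure (Measure.pi _))

lemma integral_prod_comp_pi_bern {ι : Type*} [Fintype ι] {r : ℝ} (h0 : 0 ≤ r) (h1 : r ≤ 1)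
    (σ : ι ≃ ι) (s : Finset ι) (u : ι → Bool → ℝ) :
    ∫ f : ι → Bool, ∏ i ∈ s, u i (f (σ i)) ∂Measure.pi (fun _ => bern r)
      = ∏ i ∈ s, (r * u i true + (1 - r) * u i false) := by
  classical
  have := isProbabilityMeasure_bern h0 h1
  have reindex (w : ι → ℝ) :
      ∏ j, (if σ.symm j ∈ s then w (σ.symm j) else 1) = ∏ i ∈ s, w i :=
    (σ.symm.prod_comp fun i => if i ∈ s then w i else 1).trans (Fintype.prod_ite_mem s w)
  calc ∫ f : ι → Bool, ∏ i ∈ s, u i (f (σ i)) ∂Measure.pi (fun _ => bern r)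
      = ∫ f : ι → Bool, ∏ j, (if σ.symm j ∈ s then u (σ.symm j) (f j) else 1)
          ∂Measure.pi (fun _ => bern r) := by
        congr 1 with f
        rw [← reindex]
        simp only [Equiv.apply_symm_apply]
    _ = ∏ j, (if σ.symm j ∈ s then r * u (σ.symm j) true + (1 - r) * u (σ.symm j) false
          else 1) := by
        rw [integral_fintype_prod_eq_prod
          (f := fun j b => if σ.symm j ∈ s then u (σ.symm j) b else 1)]
        congr 1 with j
        split_ifs <;> simp [integral_bern h0 h1]
    _ = ∏ i ∈ s, (r * u i true + (1 - r) * u i false) :=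
        reindex fun i => r * u i true + (1 - r) * u i false

lemma overlap_edgesOf {n k : ℕ} (σ : Equiv.Perm (Fin n)) (f g : Finset (Fin n) → Bool) :
    overlap n (edgesOf n k f) (edgesOf n k g) σ
      = #{e ∈ powersetCard k univ | f e = true ∧ g (e.image σ) = true} := by
  refine (congrArg card ?_).trans (card_image_of_injective _ (image_injective σ.injective))
  ext a
  simp only [edgesOf, mem_inter, mem_image, mem_filter, mem_univ, true_and, mem_powersetCard_univ]
  constructor
  · rintro ⟨⟨e, ⟨hk, hf⟩, rfl⟩, -, hg⟩
    exact ⟨e, ⟨hk, hf, hg⟩, rfl⟩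
  · rintro ⟨e, ⟨hk, hf, hg⟩, rfl⟩
    exact ⟨⟨e, ⟨hk, hf⟩, rfl⟩, by rw [card_image_of_injective _ σ.injective, hk], hg⟩

lemma mgf_overlap {n k : ℕ} (σ : Equiv.Perm (Fin n)) {p q : ℝ} (hp0 : 0 ≤ p) (hp1 : p ≤ 1)
    (hq0 : 0 ≤ q) (hq1 : q ≤ 1) (l : ℝ) :
    mgf (fun ω => (overlap n (edgesOf n k ω.1) (edgesOf n k ω.2) σ : ℝ))
      ((hypMeasure n p).prod (hypMeasure n q)) l = (1 + p * q * (exp l - 1)) ^ n.choose k := by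
  have := isProbabilityMeasure_hypMeasure n hp0 hp1
  have := isProbabilityMeasure_hypMeasure n hq0 hq1
  let W : Bool → Bool → ℝ := fun a b => if a = true ∧ b = true then exp l else 1
  have exp_overlap (f g : Finset (Fin n) → Bool) :
      exp (l * overlap n (edgesOf n k f) (edgesOf n k g) σ)
        = ∏ e ∈ powersetCard k univ, W (f e) (g (σ.finsetCongr e)) := by
    rw [overlap_edgesOf, card_filter, Nat.cast_sum, mul_sum, exp_sum]
    refine prod_congr rfl fun e _ => ?_
    simp only [W, Equiv.finsetCongr_apply, map_eq_image, Equiv.coe_toEmbedding]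
    split_ifs <;> simp
  rw [mgf, integral_prod _ .of_finite]
  simp_rw [exp_overlap]
  calc ∫ f, ∫ g, ∏ e ∈ powersetCard k univ, W (f e) (g (σ.finsetCongr e)) ∂hypMeasure n q
        ∂hypMeasure n p
      = ∫ f, ∏ e ∈ powersetCard k univ, (q * W (f e) true + (1 - q) * W (f e) false)
          ∂hypMeasure n p := by
        congr 1 with f
        exact integral_prod_comp_pi_bern hq0 hq1 _ _ fun e => W (f e)
    _ = ∏ _e ∈ powersetCard k (univ : Finset (Fin n)),
          (p * (q * exp l + (1 - q)) + (1 - p)) := by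
        refine (integral_prod_comp_pi_bern hp0 hp1 (Equiv.refl (Finset (Fin n))) _
          fun _ a => q * W a true + (1 - q) * W a false).trans ?_
        simp [W]
    _ = (1 + p * q * (exp l - 1)) ^ n.choose k := by
        rw [prod_const, card_powersetCard, card_univ, Fintype.card_fin]
        ring

lemma exp_le_one_add_add_sq {x : ℝ} (hx : |x| ≤ 5 / 7) : exp x ≤ 1 + x + 7 / 10 * x ^ 2 := by
  have taylor := abs_le.1 (Real.exp_bound (hx.trans (by norm_num)) (n := 3) (by norm_num))
  have cube : |x| ^ 3 ≤ 5 / 7 * x ^ 2 := by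
    rw [pow_succ, sq_abs, mul_comm]
    exact mul_le_mul_of_nonneg_right hx (sq_nonneg x)
  norm_num [Finset.sum_range_succ, Nat.factorial] at taylor
  nlinarith [taylor.2]

lemma chernoff_exponent_le {m s : ℝ} (hm : 0 < m) (hs : |s| ≤ m) :
    -(5 * s / (7 * m)) * (m + s) + m * (exp (5 * s / (7 * m)) - 1) ≤ -(5 / 14) * s ^ 2 / m := by
  have hl : |5 * s / (7 * m)| ≤ 5 / 7 := by
    rw [abs_div, abs_mul, abs_of_pos (by positivity : (0 : ℝ) < 7 * m),
      div_le_iff₀ (by positivity)]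
    norm_num
    linarith
  calc -(5 * s / (7 * m)) * (m + s) + m * (exp (5 * s / (7 * m)) - 1)
      ≤ -(5 * s / (7 * m)) * (m + s)
          + m * (5 * s / (7 * m) + 7 / 10 * (5 * s / (7 * m)) ^ 2) := by
        gcongr
        linarith [exp_le_one_add_add_sq hl]
    _ = -(5 / 14) * s ^ 2 / m := by
        field_simp
        ring

lemma measureReal_lt_abs_sub_le_of_mgf_le {Ω : Type*} [MeasurableSpace Ω] {μ : Measure Ω}
    [IsFiniteMeasure μ] {S : Ω → ℝ} {m t : ℝ}
    (hint : ∀ l, Integrable (fun ω => exp (l * S ω)) μ)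
    (hmgf : ∀ l, mgf S μ l ≤ exp (m * (exp l - 1)))
    (hm : 0 < m) (ht : 0 ≤ t) (htm : t ≤ m) :
    μ.real {ω | t < |S ω - m|} ≤ 2 * exp (-(5 / 14) * t ^ 2 / m) := by
  have chernoff (s : ℝ) (hs : |s| ≤ m) :
      exp (-(5 * s / (7 * m)) * (m + s)) * mgf S μ (5 * s / (7 * m))
        ≤ exp (-(5 / 14) * s ^ 2 / m) :=
    calc exp (-(5 * s / (7 * m)) * (m + s)) * mgf S μ (5 * s / (7 * m))
        ≤ exp (-(5 * s / (7 * m)) * (m + s)) * exp (m * (exp (5 * s / (7 * m)) - 1)) := by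
          gcongr
          exact hmgf _
      _ ≤ exp (-(5 / 14) * s ^ 2 / m) := by
          rw [← exp_add]
          exact exp_le_exp.2 (chernoff_exponent_le hm hs)
  have upper : μ.real {ω | m + t ≤ S ω} ≤ exp (-(5 / 14) * t ^ 2 / m) :=
    (measure_ge_le_exp_mul_mgf _ (by positivity) (hint _)).trans
      (chernoff t (abs_le.2 ⟨by linarith, htm⟩))
  have lower : μ.real {ω | S ω ≤ m - t} ≤ exp (-(5 / 14) * t ^ 2 / m) := by
    have := chernoff (-t) (by rwa [abs_neg, abs_of_nonneg ht])
    rw [neg_sq, ← sub_eq_add_neg] at this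
    have hl : 5 * -t / (7 * m) ≤ 0 := div_nonpos_of_nonpos_of_nonneg (by linarith) (by positivity)
    exact (measure_le_le_exp_mul_mgf _ hl (hint _)).trans this
  calc μ.real {ω | t < |S ω - m|}
      ≤ μ.real ({ω | m + t ≤ S ω} ∪ {ω | S ω ≤ m - t}) := by
        refine measureReal_mono fun ω hω => ?_
        rcases lt_abs.1 (show t < |S ω - m| from hω) with h | h
        · exact Or.inl (show m + t ≤ S ω by linarith)
        · exact Or.inr (show S ω ≤ m - t by linarith)
    _ ≤ μ.real {ω | m + t ≤ S ω} + μ.real {ω | S ω ≤ m - t} := measureReal_union_le _ _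
    _ ≤ 2 * exp (-(5 / 14) * t ^ 2 / m) := by linarith

lemma measureReal_overlap_deviation_le {n k : ℕ} (σ : Equiv.Perm (Fin n)) {p q : ℝ}
    (hp0 : 0 ≤ p) (hp1 : p ≤ 1) (hq0 : 0 ≤ q) (hq1 : q ≤ 1)
    (h4 : 4 * (n : ℝ) * log n < p * q * n.choose k) :
    ((hypMeasure n p).prod (hypMeasure n q)).real
      {ω | 2 * √(p * q * n.choose k * n * log n) <
        |(overlap n (edgesOf n k ω.1) (edgesOf n k ω.2) σ : ℝ) - p * q * n.choose k|}
      ≤ 2 * exp (-(10 / 7) * (n * log n)) := by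
  have := isProbabilityMeasure_hypMeasure n hp0 hp1
  have := isProbabilityMeasure_hypMeasure n hq0 hq1
  set m : ℝ := p * q * n.choose k
  set L : ℝ := n * log n
  have hL : 0 ≤ L := mul_nonneg (Nat.cast_nonneg n) (log_natCast_nonneg n)
  have hm : 0 < m := by linarith
  have hpq : p * q ≤ 1 := mul_le_one₀ hp1 hq0 hq1
  have hmgf (l : ℝ) : mgf (fun ω => (overlap n (edgesOf n k ω.1) (edgesOf n k ω.2) σ : ℝ))
      ((hypMeasure n p).prod (hypMeasure n q)) l ≤ exp (m * (exp l - 1)) := by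
    rw [mgf_overlap σ hp0 hp1 hq0 hq1,
      show m * (exp l - 1) = n.choose k * (p * q * (exp l - 1)) by ring, exp_nat_mul]
    refine pow_le_pow_left₀ ?_ (by linarith [add_one_le_exp (p * q * (exp l - 1))]) _
    nlinarith [exp_pos l, mul_nonneg hp0 hq0]
  have ht : (2 * √(m * L)) ^ 2 = 4 * m * L := by
    rw [mul_pow, sq_sqrt (by positivity)]
    ring
  have htm : 2 * √(m * L) ≤ m := by
    nlinarith [sqrt_nonneg (m * L)]
  have key := measureReal_lt_abs_sub_le_of_mgf_le (fun _ => .of_finite) hmgf hm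
    (by positivity) htm
  rw [ht, show -(5 / 14) * (4 * m * L) / m = -(10 / 7) * L by field_simp; ring] at key
  rwa [show m * n * log n = m * L by ring]

lemma factorial_mul_two_mul_exp_le {n : ℕ} (hn : 9 ≤ n) :
    (n.factorial : ℝ) * (2 * exp (-(10 / 7) * (n * log n))) ≤ exp (-n / 2) := by
  have hn9 : (9 : ℝ) ≤ n := by exact_mod_cast hn
  have hlog : 2 ≤ log n := by
    rw [le_log_iff_exp_le (by linarith), show (2 : ℝ) = 1 + 1 by norm_num, exp_add]
    nlinarith [exp_one_lt_three, exp_pos 1]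
  have hfact : (n.factorial : ℝ) ≤ exp (n * log n) := by
    rw [exp_nat_mul, exp_log (by linarith)]
    exact_mod_cast Nat.factorial_le_pow n
  have htwo : 2 ≤ exp (3 / 7 * (n * log n) - n / 2) := by
    have : 1 ≤ 3 / 7 * (n * log n) - n / 2 := by nlinarith
    linarith [add_one_le_exp (3 / 7 * (n * log n) - n / 2)]
  calc (n.factorial : ℝ) * (2 * exp (-(10 / 7) * (n * log n)))
      ≤ exp (n * log n) * (2 * exp (-(10 / 7) * (n * log n))) := by gcongr
    _ = 2 * exp (-(3 / 7) * (n * log n)) := by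
        rw [mul_left_comm, ← exp_add]
        ring_nf
    _ ≤ exp (3 / 7 * (n * log n) - n / 2) * exp (-(3 / 7) * (n * log n)) := by gcongr
    _ = exp (-n / 2) := by
        rw [← exp_add]
        ring_nf

lemma measureReal_lt_discP_le_sum {n k : ℕ} {p q T : ℝ}
    (μ : Measure ((Finset (Fin n) → Bool) × (Finset (Fin n) → Bool))) [IsFiniteMeasure μ] :
    μ.real {ω | T < discP n k p q (edgesOf n k ω.1) (edgesOf n k ω.2)}
      ≤ ∑ σ : Equiv.Perm (Fin n), μ.real {ω |
          T < |(overlap n (edgesOf n k ω.1) (edgesOf n k ω.2) σ : ℝ) - p * q * n.choose k|} := by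
  refine (measureReal_mono fun ω hω => ?_).trans (measureReal_iUnion_fintype_le _)
  obtain ⟨σ, -, hσ⟩ := (lt_sup'_iff _).1 (show T < discP .. from hω)
  exact Set.mem_iUnion.2 ⟨σ, hσ⟩

/-- upper bound for the probabilistic discrepancy when
`p*q*C(n,k) > 4*n*log n`. -/
theorem stmt11 :
    ∃ n₀ : ℕ, ∀ n : ℕ, n₀ ≤ n → ∀ k : ℕ, 2 ≤ k → k ≤ n → ∀ p q : ℝ,
      0 < p → p ≤ q → q ≤ 1 →
      4 * (n : ℝ) * Real.log n < p * q * (n.choose k) →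
      ENNReal.ofReal (1 - Real.exp (-(n : ℝ) / 2)) ≤
        ((hypMeasure n p).prod (hypMeasure n q))
          {ω | discP n k p q (edgesOf n k ω.1) (edgesOf n k ω.2) ≤
                 2 * Real.sqrt (p * q * (n.choose k) * n * Real.log n)} := by
  refine ⟨9, fun n hn k _ _ p q hp hpq hq1 h4 => ?_⟩
  have hq0 : 0 ≤ q := hp.le.trans hpq
  have hp1 : p ≤ 1 := hpq.trans hq1
  have := isProbabilityMeasure_hypMeasure n hp.le hp1
  have := isProbabilityMeasure_hypMeasure n hq0 hq1
  set ν := (hypMeasure n p).prod (hypMeasure n q)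
  set T := 2 * √(p * q * n.choose k * n * log n)
  have bad : ν.real {ω | T < discP n k p q (edgesOf n k ω.1) (edgesOf n k ω.2)} ≤ exp (-n / 2) :=
    calc _ ≤ _ := measureReal_lt_discP_le_sum ν
      _ ≤ ∑ _σ : Equiv.Perm (Fin n), 2 * exp (-(10 / 7) * (n * log n)) :=
          sum_le_sum fun σ _ => measureReal_overlap_deviation_le σ hp.le hp1 hq0 hq1 h4
      _ = n.factorial * (2 * exp (-(10 / 7) * (n * log n))) := by
          rw [sum_const, card_univ, Fintype.card_perm, Fintype.card_fin, nsmul_eq_mul]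
      _ ≤ exp (-n / 2) := factorial_mul_two_mul_exp_le hn
  have good := probReal_compl_eq_one_sub (μ := ν)
    (s := {ω | T < discP n k p q (edgesOf n k ω.1) (edgesOf n k ω.2)}) .of_discrete
  simp only [Set.compl_ofPred, not_lt] at good
  rw [← ofReal_measureReal, good]
  exact ENNReal.ofReal_le_ofReal (by linarith)
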